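/- arXiv:1702.07902 — 12 statements merged into one kernel-verified Lean document; each statement's English description precedes it below -/
import Mathlib

section
/- For every finite candidate set C, every tournament solution S on C, and all elections E and E' on C, if the S-Approval winner sets of E and of E' have nonempty intersection, then the S-Approval winner set of the concatenated election E + E' equals the intersection of the S-Approval winner sets of E and of E'. -/
open scoped Classical

/-- A tournament on `C`: an irreflexive relation such that for all distinct
`a b` exactly one of `r a b`, `r b a` holds. -/
def IsTournament {C : Type*} (r : C → C → Prop) : Prop :=
  (∀ a : C, ¬ r a a) ∧ ∀ a b : C, a ≠ b → (r a b ↔ ¬ r b a)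

/-- The `S`-Approval score of candidate `c` in election `E`: the number of
votes `T` of `E` with `c ∈ S T`. -/
noncomputable def approvalScore {C : Type*} (S : (C → C → Prop) → Set C)
    (E : List (C → C → Prop)) (c : C) : ℕ :=
  (E.map (fun r => if c ∈ S r then 1 else 0)).sum

/-- The `S`-Approval winner set of election `E`: candidates of maximum score. -/
def winners {C : Type*} (S : (C → C → Prop) → Set C)
    (E : List (C → C → Prop)) : Set C :=
  {c | ∀ d : C, approvalScore S E d ≤ approvalScore S E c}

/-- if the winner sets of `E` and `E'` intersect, the winner set
of the concatenation is exactly the intersection. -/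
theorem stmt_1 {C : Type*} [Finite C] (S : (C → C → Prop) → Set C)
    (hS : ∀ r : C → C → Prop, IsTournament r → (S r).Nonempty)
    (E E' : List (C → C → Prop))
    (hE : ∀ r ∈ E, IsTournament r) (hE' : ∀ r ∈ E', IsTournament r)
    (hne : (winners S E ∩ winners S E').Nonempty) :
    winners S (E ++ E') = winners S E ∩ winners S E' := by
  obtain ⟨w, hw, hw'⟩ := hne
  have hadd : ∀ c, approvalScore S (E ++ E') c =
      approvalScore S E c + approvalScore S E' c := by
    intro c
    simp [approvalScore]
  ext c
  constructor
  · intro hc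
    have h := hc w
    rw [hadd, hadd] at h
    have h1 := hw c
    have h2 := hw' c
    constructor
    · intro d
      have := hw d
      omega
    · intro d
      have := hw' d
      omega
  · rintro ⟨h1, h2⟩ d
    rw [hadd, hadd]
    exact Nat.add_le_add (h1 d) (h2 d)
end

section
/- Let C be a finite candidate set with at least two candidates and let S be a Condorcet consistent tournament solution on C. Then S-Approval is monotonic if and only if S is exclusive monotonic and S satisfies exclusive negative monotonicity (ENM). -/
open scoped Classical

/-- `r'` is obtained from `r` by improving candidate `c`: the two relations
agree on all pairs of candidates distinct from `c`, and the outneighborhood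
of `c` only grows. -/
def ImprovedBy {C : Type*} (r r' : C → C → Prop) (c : C) : Prop :=
  (∀ a b : C, a ≠ c → b ≠ c → (r a b ↔ r' a b)) ∧ ∀ b : C, r c b → r' c b

/-- `w` is the source (Condorcet winner) of the tournament `r`. -/
def IsSource {C : Type*} (r : C → C → Prop) (w : C) : Prop :=
  ∀ b : C, b ≠ w → r w b

/-- A tournament solution is Condorcet consistent if on every tournament
having a source `w` it selects exactly `{w}`. -/
def CondorcetConsistent {C : Type*} (S : (C → C → Prop) → Set C) : Prop :=
  ∀ r : C → C → Prop, IsTournament r → ∀ w : C, IsSource r w → S r = {w}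

/-- Exclusive monotonicity of a tournament solution. -/
def ExclusiveMonotonic {C : Type*} (S : (C → C → Prop) → Set C) : Prop :=
  ∀ (r r' : C → C → Prop) (c : C), IsTournament r → IsTournament r' →
    ImprovedBy r r' c → c ∈ S r → c ∈ S r' ∧ S r' ⊆ S r

/-- Exclusive negative monotonicity (ENM) of a tournament solution. -/
def ENM {C : Type*} (S : (C → C → Prop) → Set C) : Prop :=
  ∀ (r r' : C → C → Prop) (c : C), IsTournament r → IsTournament r' →
    ImprovedBy r r' c → c ∉ S r → ¬ S r' ⊆ S r → c ∈ S r'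

/-- `S`-Approval is monotonic: improving a winning candidate in every vote
keeps it winning. -/
def ApprovalMonotonic {C : Type*} (S : (C → C → Prop) → Set C) : Prop :=
  ∀ (E E' : List (C → C → Prop)) (c : C),
    (∀ r ∈ E, IsTournament r) → (∀ r ∈ E', IsTournament r) →
    List.Forall₂ (fun r r' => ImprovedBy r r' c) E E' →
    c ∈ winners S E → c ∈ winners S E'

/-!
Improving `c` in a single vote, exclusive monotonicity and ENM together say that any other
candidate `d` can gain approval only if `c` gains it as well, and `c` never loses approval;
so summed over the votes, the score of `c` minus that of `d` cannot decrease. Conversely,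
Condorcet consistency lets us add votes whose solution is a prescribed singleton: padding a
single vote with such votes makes `c` tie for the win, and a violation of exclusive
monotonicity or ENM in that vote lets some `d` overtake `c` after the improvement.
-/

theorem exists_isTournament_isSource {C : Type*} (d : C) :
    ∃ r : C → C → Prop, IsTournament r ∧ IsSource r d := by
  refine ⟨fun a b => a ≠ b ∧ (a = d ∨ (b ≠ d ∧ WellOrderingRel a b)),
    ⟨fun a h => h.1 rfl, fun a b hab => ?_⟩, fun b hb => ⟨hb.symm, Or.inl rfl⟩⟩
  have htri := trichotomous_of WellOrderingRel a b
  have hasymm : WellOrderingRel a b → ¬ WellOrderingRel b a := asymm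
  grind

theorem ImprovedBy.refl {C : Type*} (r : C → C → Prop) (c : C) : ImprovedBy r r c :=
  ⟨fun _ _ _ _ => Iff.rfl, fun _ h => h⟩

section Approval

variable {C : Type*} {S : (C → C → Prop) → Set C}

@[simp]
theorem approvalScore_nil (c : C) : approvalScore S [] c = 0 := rfl

@[simp]
theorem approvalScore_cons (r : C → C → Prop) (E : List (C → C → Prop)) (c : C) :
    approvalScore S (r :: E) c = (if c ∈ S r then 1 else 0) + approvalScore S E c := by
  simp [approvalScore]

theorem approval_add_le_of_improvedBy (hEM : ExclusiveMonotonic S) (hENM : ENM S)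
    {r r' : C → C → Prop} {c : C} (hr : IsTournament r) (hr' : IsTournament r')
    (himp : ImprovedBy r r' c) (d : C) :
    (if d ∈ S r' then 1 else 0) + (if c ∈ S r then 1 else 0) ≤
      (if c ∈ S r' then 1 else 0) + (if d ∈ S r then 1 else 0) := by
  by_cases hc : c ∈ S r
  · obtain ⟨hc', hsub⟩ := hEM r r' c hr hr' himp hc
    by_cases hd' : d ∈ S r'
    · simp [hc, hc', hd', hsub hd']
    · simp [hc, hc', hd']
  · by_cases hsub : S r' ⊆ S r
    · by_cases hd' : d ∈ S r'
      · simp [hc, hd', hsub hd']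
      · simp [hc, hd']
    · simp only [hc, hENM r r' c hr hr' himp hc hsub, if_true, if_false]
      split_ifs <;> omega

theorem approvalScore_add_le_of_improvedBy (hEM : ExclusiveMonotonic S) (hENM : ENM S)
    {E E' : List (C → C → Prop)} {c : C}
    (hE : ∀ r ∈ E, IsTournament r) (hE' : ∀ r ∈ E', IsTournament r)
    (himp : List.Forall₂ (fun r r' => ImprovedBy r r' c) E E') (d : C) :
    approvalScore S E' d + approvalScore S E c ≤
      approvalScore S E' c + approvalScore S E d := by
  induction himp with
  | nil => simp
  | @cons r r' E E' hhead _ ih =>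
    rw [List.forall_mem_cons] at hE hE'
    have hvote := approval_add_le_of_improvedBy hEM hENM hE.1 hE'.1 hhead d
    have hrest := ih hE.2 hE'.2
    simp only [approvalScore_cons]
    omega

theorem approvalMonotonic_of_exclusiveMonotonic_of_enm (hEM : ExclusiveMonotonic S)
    (hENM : ENM S) : ApprovalMonotonic S := by
  intro E E' c hE hE' himp hc d
  have := approvalScore_add_le_of_improvedBy hEM hENM hE hE' himp d
  have := hc d
  omega

theorem ApprovalMonotonic.mem_winners_cons (hmono : ApprovalMonotonic S)
    {r r' : C → C → Prop} {c : C} {E : List (C → C → Prop)} (hr : IsTournament r)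
    (hr' : IsTournament r') (himp : ImprovedBy r r' c) (hE : ∀ t ∈ E, IsTournament t)
    (hc : c ∈ winners S (r :: E)) : c ∈ winners S (r' :: E) :=
  hmono _ _ c (List.forall_mem_cons.2 ⟨hr, hE⟩) (List.forall_mem_cons.2 ⟨hr', hE⟩)
    (.cons himp (List.forall₂_same.2 fun t _ => ImprovedBy.refl t c)) hc

theorem ApprovalMonotonic.exclusiveMonotonic (hmono : ApprovalMonotonic S)
    (hS : ∀ r : C → C → Prop, IsTournament r → (S r).Nonempty)
    (hCC : CondorcetConsistent S) : ExclusiveMonotonic S := by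
  intro r r' c hr hr' himp hc
  have hc' : c ∈ S r' := by
    by_contra hc'
    obtain ⟨e, he⟩ := hS r' hr'
    have hwin : c ∈ winners S [r] := fun x => by
      simp only [approvalScore_cons, approvalScore_nil, hc]
      split_ifs <;> omega
    have := hmono.mem_winners_cons hr hr' himp (by simp) hwin e
    simp [he, hc'] at this
  refine ⟨hc', fun d hd => by_contra fun hdr => ?_⟩
  have hdc : d ≠ c := by rintro rfl; exact hdr hc
  obtain ⟨t, ht, hsrc⟩ := exists_isTournament_isSource d
  have hSt : S t = {d} := hCC t ht d hsrc
  have hwin : c ∈ winners S [r, t] := fun e => by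
    by_cases hed : e = d
    · subst hed; simp [hSt, hdr, hc, hdc.symm]
    · simp only [approvalScore_cons, hSt, Set.mem_singleton_iff, hed, ↓reduceIte,
        approvalScore_nil, add_zero, hc, hdc.symm]
      split_ifs <;> omega
  have := hmono.mem_winners_cons hr hr' himp (by simp [ht]) hwin d
  simp [hSt, hd, hc', hdc.symm] at this

theorem ApprovalMonotonic.enm (hmono : ApprovalMonotonic S) (hCC : CondorcetConsistent S) :
    ENM S := by
  intro r r' c hr hr' himp hc hnsub
  by_contra hc'
  obtain ⟨d, hd, hdr⟩ := Set.not_subset.mp hnsub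
  have hdc : d ≠ c := by rintro rfl; exact hc' hd
  obtain ⟨tc, htc, hsrc_c⟩ := exists_isTournament_isSource c
  obtain ⟨td, htd, hsrc_d⟩ := exists_isTournament_isSource d
  have hStc : S tc = {c} := hCC tc htc c hsrc_c
  have hStd : S td = {d} := hCC td htd d hsrc_d
  have hwin : c ∈ winners S [r, tc, td] := fun e => by
    by_cases hec : e = c
    · subst hec; simp [hStc, hStd, hc, hdc.symm]
    by_cases hed : e = d
    · subst hed; simp [hStc, hStd, hc, hdr, hdc]
    simp only [approvalScore_cons, hStc, Set.mem_singleton_iff, hec, ↓reduceIte, hStd, hed,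
      approvalScore_nil, add_zero, hc, hdc.symm, zero_add]
    split_ifs <;> omega
  have := hmono.mem_winners_cons hr hr' himp (by simp [htc, htd]) hwin d
  simp [hStc, hStd, hd, hc', hdc, hdc.symm] at this

end Approval

theorem stmt_2_general {C : Type*}
    (S : (C → C → Prop) → Set C)
    (hS : ∀ r : C → C → Prop, IsTournament r → (S r).Nonempty)
    (hCC : CondorcetConsistent S) :
    ApprovalMonotonic S ↔ ExclusiveMonotonic S ∧ ENM S :=
  ⟨fun hmono => ⟨hmono.exclusiveMonotonic hS hCC, hmono.enm hCC⟩,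
    fun ⟨hEM, hENM⟩ => approvalMonotonic_of_exclusiveMonotonic_of_enm hEM hENM⟩

/-- for a Condorcet consistent tournament solution `S` on a set
of at least two candidates, `S`-Approval is monotonic iff `S` is exclusive
monotonic and satisfies ENM. -/
theorem stmt_2 {C : Type*} [Finite C] (hcard : 2 ≤ Nat.card C)
    (S : (C → C → Prop) → Set C)
    (hS : ∀ r : C → C → Prop, IsTournament r → (S r).Nonempty)
    (hCC : CondorcetConsistent S) :
    ApprovalMonotonic S ↔ ExclusiveMonotonic S ∧ ENM S :=
  stmt_2_general S hS hCC
end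

section
/- The top cycle is exclusive monotonic: for every finite candidate set C, all tournaments T, T' on C, and every candidate c ∈ TC(T), if T' is obtained from T by improving c, then c ∈ TC(T') and TC(T') ⊆ TC(T). -/
open scoped Classical

/-- The top cycle of a tournament: candidates from which every candidate is
reachable by a directed path. -/
def topCycle {C : Type*} (r : C → C → Prop) : Set C :=
  {a | ∀ b : C, Relation.ReflTransGen r a b}

/-- the top cycle is exclusive monotonic. -/
theorem stmt_4 {C : Type*} [Finite C] (r r' : C → C → Prop)
    (hr : IsTournament r) (hr' : IsTournament r') (c : C)
    (hc : c ∈ topCycle r) (himp : ImprovedBy r r' c) :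
    c ∈ topCycle r' ∧ topCycle r' ⊆ topCycle r := by
  obtain ⟨hagree, hgrow⟩ := himp
  -- any r'-path can be converted to an r-path (using c ∈ TC(r))
  have key : ∀ d b : C, Relation.ReflTransGen r' d b → Relation.ReflTransGen r d b := by
    intro d b h
    induction h with
    | refl => exact Relation.ReflTransGen.refl
    | tail hpath hedge ih =>
      rename_i a b
      by_cases ha : a = c
      · exact ih.trans (by rw [ha]; exact hc b)
      · by_cases hb : b = c
        · have hac : r a b := by
            rw [hb]
            have : ¬ r c a := fun h => (hr'.2 a c ha).mp (hb ▸ hedge) (hgrow a h)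
            exact (hr.2 a c ha).mpr this
          exact ih.tail hac
        · exact ih.tail ((hagree a b ha hb).mpr hedge)
  constructor
  · intro b
    have h := hc b
    induction h with
    | refl => exact Relation.ReflTransGen.refl
    | tail hpath hedge ih =>
      rename_i a b
      by_cases ha : a = c
      · exact Relation.ReflTransGen.single (hgrow b (ha ▸ hedge))
      · by_cases hb : b = c
        · exact hb ▸ (Relation.ReflTransGen.refl : Relation.ReflTransGen r' c c)
        · exact ih.tail ((hagree a b ha hb).mp hedge)
  · intro d hd b
    exact key d b (hd b)
end

section
/- The top cycle satisfies exclusive negative monotonicity (ENM): for every finite candidate set C, all tournaments T, T' on C, and every candidate c ∉ TC(T), if T' is obtained from T by improving c and TC(T') ⊈ TC(T), then c ∈ TC(T'). -/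
open scoped Classical

/-- the top cycle satisfies exclusive negative monotonicity. -/
theorem stmt_5 {C : Type*} [Finite C] (r r' : C → C → Prop)
    (hr : IsTournament r) (hr' : IsTournament r') (c : C)
    (hc : c ∉ topCycle r) (himp : ImprovedBy r r' c)
    (hnsub : ¬ topCycle r' ⊆ topCycle r) :
    c ∈ topCycle r' := by
  classical
  obtain ⟨a, ha', ha⟩ := Set.not_subset.mp hnsub
  -- backward closure of the top cycle under reachability
  have hback : ∀ z y : C, Relation.ReflTransGen r z y → y ∈ topCycle r →
      z ∈ topCycle r := fun z y h hy b => h.trans (hy b)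
  -- top cycle dominates
  have hdom : ∀ d ∈ topCycle r, ∀ x, x ∉ topCycle r → r d x := by
    intro d hd x hx
    have hne : d ≠ x := by rintro rfl; exact hx hd
    by_contra h
    have hxd : r x d := (hr.2 x d hne.symm).mpr (by
      intro h'; exact h h')
    exact hx (hback x d (Relation.ReflTransGen.single hxd) hd)
  -- the top cycle of r is nonempty
  have hTCne : ∃ d, d ∈ topCycle r := by
    have : Fintype C := Fintype.ofFinite C
    obtain ⟨x, -, hx⟩ := Finset.exists_max_image Finset.univ
      (fun x => (Finset.univ.filter
        (fun y => Relation.ReflTransGen r x y)).card) ⟨a, Finset.mem_univ a⟩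
    refine ⟨x, fun b => ?_⟩
    by_contra hb
    have hne : x ≠ b := by rintro rfl; exact hb Relation.ReflTransGen.refl
    have hbx : r b x := by
      by_contra h
      exact hb (Relation.ReflTransGen.single ((hr.2 x b hne).mpr h))
    have hss : (Finset.univ.filter (fun y => Relation.ReflTransGen r x y)) ⊂
        (Finset.univ.filter (fun y => Relation.ReflTransGen r b y)) := by
      constructor
      · intro y hy
        simp only [Finset.mem_filter, Finset.mem_univ, true_and] at hy ⊢
        exact (Relation.ReflTransGen.single hbx).trans hy
      · intro hsub
        have : b ∈ Finset.univ.filter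
            (fun y => Relation.ReflTransGen r b y) := by
          simp [Relation.ReflTransGen.refl]
        have := hsub this
        simp only [Finset.mem_filter, Finset.mem_univ, true_and] at this
        exact hb this
    exact absurd (hx b (Finset.mem_univ b)) (not_le.mpr (Finset.card_lt_card hss))
  by_cases hcase : ∃ d ∈ topCycle r, r' c d
  · -- c beats some element of the old top cycle in r'
    obtain ⟨d, hd, hcd⟩ := hcase
    -- inside the old top cycle, r-paths are r'-paths
    have htrans : ∀ z : C, ∀ y ∈ topCycle r, Relation.ReflTransGen r z y →
        Relation.ReflTransGen r' z y := by
      intro z y hy h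
      induction h using Relation.ReflTransGen.head_induction_on with
      | refl => exact Relation.ReflTransGen.refl
      | @head u v h' hrest ih =>
        have hv : v ∈ topCycle r := hback v y hrest hy
        have hu : u ∈ topCycle r := hback u y (hrest.head h') hy
        have huc : u ≠ c := by rintro rfl; exact hc hu
        have hvc : v ≠ c := by rintro rfl; exact hc hv
        exact (ih).head ((himp.1 u v huc hvc).mp h')
    intro b
    by_cases hbc : b = c
    · subst hbc; exact Relation.ReflTransGen.refl
    by_cases hb : b ∈ topCycle r
    · exact (Relation.ReflTransGen.single hcd).trans (htrans d b hb (hd b))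
    · have hdb : r d b := hdom d hd b hb
      have hdc : d ≠ c := by rintro rfl; exact hc hd
      have : r' d b := (himp.1 d b hdc hbc).mp hdb
      exact (Relation.ReflTransGen.single hcd).trans
        (Relation.ReflTransGen.single this)
  · -- otherwise the old top cycle is still dominant, contradiction
    push_neg at hcase
    obtain ⟨d₀, hd₀⟩ := hTCne
    have hclose : ∀ x y : C, Relation.ReflTransGen r' x y → y ∈ topCycle r →
        x ∈ topCycle r := by
      intro x y h hy
      induction h using Relation.ReflTransGen.head_induction_on with
      | refl => exact hy
      | @head u v h' hrest ih =>
        have hv : v ∈ topCycle r := ih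
        by_contra hu
        by_cases huc : u = c
        · subst huc; exact hcase v hv h'
        · have hvc : v ≠ c := by rintro rfl; exact hc hv
          have huv : r u v := (himp.1 u v huc hvc).mpr h'
          have hvu : r v u := hdom v hv u hu
          exact ((hr.2 u v (by rintro rfl; exact hu hv)).mp huv) hvu
    exact absurd (hclose a d₀ (ha' d₀) hd₀) ha
end

section
/- TC-Approval is monotonic: for every finite candidate set C, all elections E and E' on C with the same number of votes, and every candidate c that is a TC-Approval winner of E, if E' is obtained from E by improving c, then c is a TC-Approval winner of E'. -/
open scoped Classical

section Aux

variable {C : Type*}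

lemma reach_transfer {r r' : C → C → Prop} {c : C} (h : ImprovedBy r r' c)
    {a b : C} (hab : Relation.ReflTransGen r a b)
    (hca : Relation.ReflTransGen r' c a) : Relation.ReflTransGen r' c b := by
  induction hab with
  | refl => exact hca
  | @tail x y hax hxy ih =>
    by_cases hx : x = c
    · subst hx; exact ih.tail (h.2 _ hxy)
    · by_cases hy : y = c
      · subst hy; exact .refl
      · exact ih.tail ((h.1 _ _ hx hy).mp hxy)

lemma claimA {r r' : C → C → Prop} {c : C} (h : ImprovedBy r r' c)
    (hc : c ∈ topCycle r) : c ∈ topCycle r' :=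
  fun b => reach_transfer h (hc b) .refl

lemma closed_of_dom {s : C → C → Prop} {D : Set C}
    (hdom : ∀ x y, x ∉ D → y ∈ D → ¬ s x y) {x a : C}
    (hxa : Relation.ReflTransGen s x a) : a ∈ D → x ∈ D := by
  induction hxa with
  | refl => exact id
  | @tail m b hxm hmb ih =>
    intro hb
    by_cases hm : m ∈ D
    · exact ih hm
    · exact absurd hmb (hdom m b hm hb)

lemma tc_dom {r : C → C → Prop} (hr : IsTournament r) {a b : C}
    (ha : a ∈ topCycle r) (hb : b ∉ topCycle r) : r a b := by
  have hne : a ≠ b := fun h => hb (h ▸ ha)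
  have hnb : ¬ r b a := fun hba =>
    hb (fun x => (Relation.ReflTransGen.single hba).trans (ha x))
  exact (hr.2 a b hne).mpr hnb

lemma tc_dom' {r : C → C → Prop} (hr : IsTournament r) :
    ∀ x y, x ∉ topCycle r → y ∈ topCycle r → ¬ r x y := by
  intro x y hx hy hxy
  have hyx : r y x := tc_dom hr hy hx
  have hne : y ≠ x := fun h => hx (h ▸ hy)
  exact ((hr.2 y x hne).mp hyx) hxy

lemma in_edge {r r' : C → C → Prop} (hr : IsTournament r) (hr' : IsTournament r')
    {c x : C} (h : ImprovedBy r r' c) (hx : x ≠ c) (hxc : r' x c) : r x c := by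
  by_contra hrxc
  have hcx : r c x := (hr.2 c x (Ne.symm hx)).mpr hrxc
  exact ((hr'.2 c x (Ne.symm hx)).mp (h.2 x hcx)) hxc

lemma dom' {r r' : C → C → Prop} (hr : IsTournament r) (hr' : IsTournament r')
    {c : C} (h : ImprovedBy r r' c) (hc : c ∈ topCycle r) :
    ∀ x y, x ∉ topCycle r → y ∈ topCycle r → ¬ r' x y := by
  intro x y hx hy hxy
  have hxc : x ≠ c := fun e => hx (e ▸ hc)
  by_cases hyc : y = c
  · rw [hyc] at hxy
    exact tc_dom' hr x c hx hc (in_edge hr hr' h hxc hxy)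
  · exact tc_dom' hr x y hx hy ((h.1 x y hxc hyc).mpr hxy)

lemma claim1 {r r' : C → C → Prop} (hr : IsTournament r) (hr' : IsTournament r')
    {c : C} (h : ImprovedBy r r' c) (hc : c ∈ topCycle r)
    {d : C} (hd : d ∈ topCycle r') : d ∈ topCycle r :=
  closed_of_dom (dom' hr hr' h hc) (hd c) hc

lemma tc_nonempty [Fintype C] [Nonempty C] {r : C → C → Prop}
    (hr : IsTournament r) : ∃ a, a ∈ topCycle r := by
  obtain ⟨a, -, ha⟩ := Finset.exists_max_image Finset.univ
    (fun a => (Finset.univ.filter fun b => Relation.ReflTransGen r a b).card)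
    Finset.univ_nonempty
  refine ⟨a, fun b => ?_⟩
  by_contra hb
  have hss : (Finset.univ.filter fun x => Relation.ReflTransGen r a x) ⊂
      (Finset.univ.filter fun x => Relation.ReflTransGen r b x) := by
    rw [Finset.ssubset_def]
    constructor
    · intro x hx
      simp only [Finset.mem_filter, Finset.mem_univ, true_and] at hx ⊢
      have hxb : x ≠ b := by rintro rfl; exact hb hx
      have hnxb : ¬ r x b := fun hxb' => hb (hx.tail hxb')
      exact Relation.ReflTransGen.single ((hr.2 b x (Ne.symm hxb)).mpr hnxb)
    · intro hsub
      have hbmem : b ∈ Finset.univ.filter fun x => Relation.ReflTransGen r b x :=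
        Finset.mem_filter.mpr ⟨Finset.mem_univ b, .refl⟩
      have := hsub hbmem
      simp only [Finset.mem_filter, Finset.mem_univ, true_and] at this
      exact hb this
  exact absurd (ha b (Finset.mem_univ b)) (not_le.mpr (Finset.card_lt_card hss))

lemma reach_avoid {r r' : C → C → Prop} {c : C} (h : ImprovedBy r r' c)
    {x a : C} (hxa : Relation.ReflTransGen r' x a) :
    ¬ Relation.ReflTransGen r' c a → Relation.ReflTransGen r x a := by
  induction hxa with
  | refl => intro _; exact .refl
  | @tail m b hxm hmb ih =>
    intro hca
    have hmc : m ≠ c := by rintro rfl; exact hca (Relation.ReflTransGen.single hmb)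
    have hbc : b ≠ c := by rintro rfl; exact hca .refl
    have hcm : ¬ Relation.ReflTransGen r' c m := fun hc => hca (hc.tail hmb)
    exact (ih hcm).tail ((h.1 m b hmc hbc).mpr hmb)

lemma claim2 [Fintype C] {r r' : C → C → Prop} (hr : IsTournament r)
    (hr' : IsTournament r') {c : C} (h : ImprovedBy r r' c)
    (hc : c ∉ topCycle r') {d : C} (hd : d ∈ topCycle r') : d ∈ topCycle r := by
  have : Nonempty C := ⟨c⟩
  obtain ⟨a, ha⟩ := tc_nonempty hr
  have hca : ¬ Relation.ReflTransGen r' c a := fun hca =>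
    hc (fun b => reach_transfer h (ha b) hca)
  have hda : Relation.ReflTransGen r d a := reach_avoid h (hd a) hca
  exact closed_of_dom (tc_dom' hr) hda ha

lemma vote_ineq [Fintype C] {r r' : C → C → Prop} (hr : IsTournament r)
    (hr' : IsTournament r') {c d : C} (h : ImprovedBy r r' c) :
    ((if d ∈ topCycle r' then 1 else 0) + (if c ∈ topCycle r then 1 else 0) : ℕ) ≤
    (if d ∈ topCycle r then 1 else 0) + (if c ∈ topCycle r' then 1 else 0) := by
  by_cases h1 : d ∈ topCycle r' <;> by_cases h2 : c ∈ topCycle r <;>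
    by_cases h3 : d ∈ topCycle r <;> by_cases h4 : c ∈ topCycle r' <;>
    simp only [h1, h2, h3, h4, if_true, if_false, if_pos, if_neg, not_false_iff] <;>
    first
      | omega
      | exact absurd (claimA h h2) h4
      | exact absurd (claim1 hr hr' h h2 h1) h3
      | exact absurd (claim2 hr hr' h h4 h1) h3

lemma vote_mono {r r' : C → C → Prop} {c : C} (h : ImprovedBy r r' c) :
    ((if c ∈ topCycle r then 1 else 0) : ℕ) ≤ (if c ∈ topCycle r' then 1 else 0) := by
  by_cases h2 : c ∈ topCycle r <;> by_cases h4 : c ∈ topCycle r' <;>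
    simp only [h2, h4, if_true, if_false, if_pos, if_neg, not_false_iff] <;>
    first
      | omega
      | exact absurd (claimA h h2) h4

lemma list_ineq [Fintype C] {c d : C} {E E' : List (C → C → Prop)}
    (h : List.Forall₂ (fun r r' => ImprovedBy r r' c) E E') :
    (∀ r ∈ E, IsTournament r) → (∀ r ∈ E', IsTournament r) →
    approvalScore topCycle E' d + approvalScore topCycle E c ≤
      approvalScore topCycle E d + approvalScore topCycle E' c := by
  induction h with
  | nil => intro _ _; simp [approvalScore]
  | @cons r r' l l' hrr htail ih =>
    intro hE hE'
    have h1 := vote_ineq (c := c) (d := d) (hE r (by simp)) (hE' r' (by simp)) hrr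
    have h2 := ih (fun s hs => hE s (List.mem_cons_of_mem _ hs))
      (fun s hs => hE' s (List.mem_cons_of_mem _ hs))
    simp only [approvalScore, List.map_cons, List.sum_cons] at h2 ⊢
    omega

lemma list_mono {c : C} {E E' : List (C → C → Prop)}
    (h : List.Forall₂ (fun r r' => ImprovedBy r r' c) E E') :
    approvalScore topCycle E c ≤ approvalScore topCycle E' c := by
  induction h with
  | nil => simp [approvalScore]
  | @cons r r' l l' hrr htail ih =>
    have h1 := vote_mono hrr
    simp only [approvalScore, List.map_cons, List.sum_cons] at ih ⊢
    omega

end Aux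

/-- TC-Approval is monotonic. -/
theorem stmt_8 {C : Type*} [Finite C]
    (E E' : List (C → C → Prop)) (c : C)
    (hE : ∀ r ∈ E, IsTournament r) (hE' : ∀ r ∈ E', IsTournament r)
    (himp : List.Forall₂ (fun r r' => ImprovedBy r r' c) E E')
    (hwin : c ∈ winners topCycle E) :
    c ∈ winners topCycle E' := by
  have _inst : Fintype C := Fintype.ofFinite C
  intro d
  have h1 := list_ineq (d := d) himp hE hE'
  have h2 := list_mono himp
  have h3 := hwin d
  omega
end

section
/- UC-Approval is not monotonic: there exist a finite candidate set C, elections E and E' on C with the same number of votes, and a candidate c that is a UC-Approval winner of E, such that E' is obtained from E by improving c and yet c is not a UC-Approval winner of E'. -/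
open scoped Classical

/-- The uncovered set: the set of kings, i.e. candidates `a` such that every
other candidate is beaten by `a` or by some candidate that `a` beats. -/
def UC {C : Type*} (r : C → C → Prop) : Set C :=
  {a | ∀ b : C, b ≠ a → r a b ∨ ∃ d : C, r a d ∧ r d b}

/- Explicit tournaments on `Fin 4`, encoded by Boolean edge functions. -/
def f1 : Fin 4 → Fin 4 → Bool := fun a b =>
  decide ((a, b) ∈ ([(0,1),(1,3),(3,0),(0,2),(1,2),(3,2)] : List (Fin 4 × Fin 4)))

def f2 : Fin 4 → Fin 4 → Bool := fun a b =>
  decide ((a, b) ∈ ([(0,2),(1,0),(2,1),(2,3),(3,0),(3,1)] : List (Fin 4 × Fin 4)))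

def f2' : Fin 4 → Fin 4 → Bool := fun a b =>
  decide ((a, b) ∈ ([(0,2),(0,3),(1,0),(2,1),(2,3),(3,1)] : List (Fin 4 × Fin 4)))

def f3 : Fin 4 → Fin 4 → Bool := fun a b =>
  decide ((a, b) ∈ ([(1,0),(1,2),(1,3),(0,2),(2,3),(3,0)] : List (Fin 4 × Fin 4)))

def r1 : Fin 4 → Fin 4 → Prop := fun a b => f1 a b = true
def r2 : Fin 4 → Fin 4 → Prop := fun a b => f2 a b = true
def r2' : Fin 4 → Fin 4 → Prop := fun a b => f2' a b = true
def r3 : Fin 4 → Fin 4 → Prop := fun a b => f3 a b = true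

lemma uc_mem (f : Fin 4 → Fin 4 → Bool) (a : Fin 4)
    (h : (∀ b : Fin 4, b ≠ a → f a b = true ∨ ∃ d : Fin 4, f a d = true ∧ f d b = true)) :
    a ∈ UC (fun x y => f x y = true) := h

lemma uc_not_mem (f : Fin 4 → Fin 4 → Bool) (a : Fin 4)
    (h : ¬ (∀ b : Fin 4, b ≠ a → f a b = true ∨ ∃ d : Fin 4, f a d = true ∧ f d b = true)) :
    a ∉ UC (fun x y => f x y = true) := h

lemma isT (f : Fin 4 → Fin 4 → Bool) (h1 : ∀ a : Fin 4, ¬ f a a = true)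
    (h2 : ∀ a b : Fin 4, a ≠ b → (f a b = true ↔ ¬ f b a = true)) :
    IsTournament (fun x y => f x y = true) := ⟨h1, h2⟩

lemma impB (f f' : Fin 4 → Fin 4 → Bool) (c : Fin 4)
    (h1 : ∀ a b : Fin 4, a ≠ c → b ≠ c → (f a b = true ↔ f' a b = true))
    (h2 : ∀ b : Fin 4, f c b = true → f' c b = true) :
    ImprovedBy (fun x y => f x y = true) (fun x y => f' x y = true) c := ⟨h1, h2⟩

/-- UC-Approval is not monotonic. -/
theorem stmt_10 : ∃ (C : Type) (E E' : List (C → C → Prop)) (c : C),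
    Finite C ∧ (∀ r ∈ E, IsTournament r) ∧ (∀ r ∈ E', IsTournament r) ∧
    List.Forall₂ (fun r r' => ImprovedBy r r' c) E E' ∧
    c ∈ winners UC E ∧ c ∉ winners UC E' := by
  refine ⟨Fin 4, [r1, r2, r3], [r1, r2', r3], 0, inferInstance, ?_, ?_, ?_, ?_, ?_⟩
  · intro r hr
    simp only [List.mem_cons, List.not_mem_nil, or_false] at hr
    rcases hr with rfl | rfl | rfl
    · exact isT f1 (by decide) (by decide)
    · exact isT f2 (by decide) (by decide)
    · exact isT f3 (by decide) (by decide)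
  · intro r hr
    simp only [List.mem_cons, List.not_mem_nil, or_false] at hr
    rcases hr with rfl | rfl | rfl
    · exact isT f1 (by decide) (by decide)
    · exact isT f2' (by decide) (by decide)
    · exact isT f3 (by decide) (by decide)
  · exact List.Forall₂.cons (impB f1 f1 0 (by decide) (by decide))
      (List.Forall₂.cons (impB f2 f2' 0 (by decide) (by decide))
        (List.Forall₂.cons (impB f3 f3 0 (by decide) (by decide)) List.Forall₂.nil))
  · have h00 : (0 : Fin 4) ∈ UC r1 := uc_mem f1 0 (by decide)
    have h01 : (0 : Fin 4) ∈ UC r2 := uc_mem f2 0 (by decide)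
    have h02 : (0 : Fin 4) ∉ UC r3 := uc_not_mem f3 0 (by decide)
    have h10 : (1 : Fin 4) ∈ UC r1 := uc_mem f1 1 (by decide)
    have h11 : (1 : Fin 4) ∉ UC r2 := uc_not_mem f2 1 (by decide)
    have h12 : (1 : Fin 4) ∈ UC r3 := uc_mem f3 1 (by decide)
    have h20 : (2 : Fin 4) ∉ UC r1 := uc_not_mem f1 2 (by decide)
    have h21 : (2 : Fin 4) ∈ UC r2 := uc_mem f2 2 (by decide)
    have h22 : (2 : Fin 4) ∉ UC r3 := uc_not_mem f3 2 (by decide)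
    have h30 : (3 : Fin 4) ∈ UC r1 := uc_mem f1 3 (by decide)
    have h31 : (3 : Fin 4) ∈ UC r2 := uc_mem f2 3 (by decide)
    have h32 : (3 : Fin 4) ∉ UC r3 := uc_not_mem f3 3 (by decide)
    have s0 : approvalScore UC [r1, r2, r3] 0 = 2 := by
      simp only [approvalScore, List.map_cons, List.map_nil, List.sum_cons, List.sum_nil,
        if_pos h00, if_pos h01, if_neg h02]
      omega
    have s1 : approvalScore UC [r1, r2, r3] 1 = 2 := by
      simp only [approvalScore, List.map_cons, List.map_nil, List.sum_cons, List.sum_nil,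
        if_pos h10, if_neg h11, if_pos h12]
      omega
    have s2 : approvalScore UC [r1, r2, r3] 2 = 1 := by
      simp only [approvalScore, List.map_cons, List.map_nil, List.sum_cons, List.sum_nil,
        if_neg h20, if_pos h21, if_neg h22]
      omega
    have s3 : approvalScore UC [r1, r2, r3] 3 = 2 := by
      simp only [approvalScore, List.map_cons, List.map_nil, List.sum_cons, List.sum_nil,
        if_pos h30, if_pos h31, if_neg h32]
      omega
    intro d
    fin_cases d
    · show approvalScore UC [r1, r2, r3] 0 ≤ approvalScore UC [r1, r2, r3] 0
      exact le_rfl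
    · show approvalScore UC [r1, r2, r3] 1 ≤ approvalScore UC [r1, r2, r3] 0
      rw [s0, s1]
    · show approvalScore UC [r1, r2, r3] 2 ≤ approvalScore UC [r1, r2, r3] 0
      rw [s0, s2]; omega
    · show approvalScore UC [r1, r2, r3] 3 ≤ approvalScore UC [r1, r2, r3] 0
      rw [s0, s3]
  · intro hwin
    have h00 : (0 : Fin 4) ∈ UC r1 := uc_mem f1 0 (by decide)
    have h01 : (0 : Fin 4) ∈ UC r2' := uc_mem f2' 0 (by decide)
    have h02 : (0 : Fin 4) ∉ UC r3 := uc_not_mem f3 0 (by decide)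
    have h10 : (1 : Fin 4) ∈ UC r1 := uc_mem f1 1 (by decide)
    have h11 : (1 : Fin 4) ∈ UC r2' := uc_mem f2' 1 (by decide)
    have h12 : (1 : Fin 4) ∈ UC r3 := uc_mem f3 1 (by decide)
    have := hwin 1
    simp only [approvalScore, List.map_cons, List.map_nil, List.sum_cons, List.sum_nil,
      if_pos h00, if_pos h01, if_neg h02, if_pos h10, if_pos h11, if_pos h12] at this
    omega
end

section
/- TC-Approval is Pareto optimal: for every finite candidate set C, every election E on C, and all candidates a, b ∈ C such that a ≻ b in every vote of E, if a is not a TC-Approval winner of E, then b is not a TC-Approval winner of E. -/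
open scoped Classical

theorem mem_topCycle_of_rel {C : Type*} {r : C → C → Prop} {a b : C} (hab : r a b)
    (hb : b ∈ topCycle r) : a ∈ topCycle r :=
  fun c => .head hab (hb c)

theorem approvalScore_le_approvalScore {C : Type*} {S : (C → C → Prop) → Set C}
    {E : List (C → C → Prop)} {a b : C} (h : ∀ r ∈ E, b ∈ S r → a ∈ S r) :
    approvalScore S E b ≤ approvalScore S E a :=
  List.sum_le_sum fun r hr => by
    by_cases hb : b ∈ S r <;> simp [hb, h r hr]

theorem mem_winners_of_approvalScore_le {C : Type*} {S : (C → C → Prop) → Set C}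
    {E : List (C → C → Prop)} {a b : C} (hb : b ∈ winners S E)
    (hba : approvalScore S E b ≤ approvalScore S E a) : a ∈ winners S E :=
  fun d => (hb d).trans hba

theorem stmt_11_general {C : Type*} (E : List (C → C → Prop))
    (a b : C)
    (hab : ∀ r ∈ E, r a b)
    (ha : a ∉ winners topCycle E) :
    b ∉ winners topCycle E :=
  fun hb => ha <| mem_winners_of_approvalScore_le hb <|
    approvalScore_le_approvalScore fun r hr => mem_topCycle_of_rel (hab r hr)

/-- TC-Approval is Pareto optimal. -/
theorem stmt_11 {C : Type*} [Finite C] (E : List (C → C → Prop))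
    (hE : ∀ r ∈ E, IsTournament r) (a b : C)
    (hab : ∀ r ∈ E, r a b)
    (ha : a ∉ winners topCycle E) :
    b ∉ winners topCycle E :=
  stmt_11_general E a b hab ha
end

section
/- CO-Approval is not Pareto optimal: there exist a finite candidate set C, an election E on C, and candidates a, b ∈ C with a ≻ b in every vote of E, such that a is not a CO-Approval winner of E but b is a CO-Approval winner of E. (In fact this is witnessed by an election with four candidates and a single vote.) -/
open scoped Classical

/-- The Copeland score of a candidate: its outdegree. -/
noncomputable def copelandScore {C : Type*} (r : C → C → Prop) (a : C) : ℕ :=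
  Nat.card {b : C // r a b}

/-- The Copeland set: candidates with maximum outdegree. -/
def CO {C : Type*} (r : C → C → Prop) : Set C :=
  {a | ∀ b : C, copelandScore r b ≤ copelandScore r a}

/-- Boolean adjacency for the witness tournament on `Fin 4`. -/
def wf : Fin 4 → Fin 4 → Bool :=
  ![![false, true, false, false],
    ![false, false, true, true],
    ![true, false, false, true],
    ![true, false, false, false]]

def wr : Fin 4 → Fin 4 → Prop := fun x y => wf x y = true

lemma wr_score (x : Fin 4) :
    copelandScore wr x = Fintype.card {b : Fin 4 // wf x b = true} := by
  rw [copelandScore]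
  simp only [wr]
  rw [Nat.card_eq_fintype_card]

lemma wr_scores : copelandScore wr 0 = 1 ∧ copelandScore wr 1 = 2 ∧
    copelandScore wr 2 = 2 ∧ copelandScore wr 3 = 1 := by
  simp only [wr_score]
  refine ⟨?_, ?_, ?_, ?_⟩ <;> decide

/-- CO-Approval is not Pareto optimal, witnessed by an election
with four candidates and a single vote. -/
theorem stmt_12 : ∃ (C : Type) (E : List (C → C → Prop)) (a b : C),
    Finite C ∧ Nat.card C = 4 ∧ E.length = 1 ∧
    (∀ r ∈ E, IsTournament r) ∧ (∀ r ∈ E, r a b) ∧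
    a ∉ winners CO E ∧ b ∈ winners CO E := by
  refine ⟨Fin 4, [wr], 0, 1, inferInstance, by simp, rfl, ?_, ?_, ?_, ?_⟩
  · intro r hr
    simp only [List.mem_singleton] at hr
    subst hr
    constructor
    · intro a; simp only [wr]; revert a; decide
    · intro a b hab; revert hab; simp only [wr]; revert a b; decide
  · intro r hr
    simp only [List.mem_singleton] at hr
    subst hr
    simp only [wr]
    decide
  · -- 0 ∉ winners
    obtain ⟨h0, h1, h2, h3⟩ := wr_scores
    intro hw
    have h1w : (1 : Fin 4) ∈ CO wr := by
      intro b; fin_cases b <;> simp [h0, h1, h2, h3]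
    have h0w : (0 : Fin 4) ∉ CO wr := by
      intro h
      have := h 1
      rw [h0, h1] at this
      omega
    have := hw 1
    simp [approvalScore, winners, h1w, h0w] at this
  · -- 1 ∈ winners
    intro d
    simp only [approvalScore, List.map, List.sum]
    obtain ⟨h0, h1, h2, h3⟩ := wr_scores
    have h1w : (1 : Fin 4) ∈ CO wr := by
      intro b; fin_cases b <;> simp [h0, h1, h2, h3]
    simp [h1w]
    split <;> omega
end

section
/- UC-Approval is not Pareto optimal: there exist a finite candidate set C, an election E on C, and candidates a, b ∈ C with a ≻ b in every vote of E, such that a is not a UC-Approval winner of E but b is a UC-Approval winner of E. (In fact this is witnessed by an election with four candidates and a single vote.) -/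
open scoped Classical

/-- The witness tournament as a Boolean matrix on `Fin 4`. -/
def myrelB : Fin 4 → Fin 4 → Bool :=
  ![![false, true,  false, false],
    ![false, false, false, true ],
    ![true,  true,  false, false],
    ![true,  false, true,  false]]

def myrel (x y : Fin 4) : Prop := myrelB x y = true

instance : DecidablePred (· ∈ UC myrel) := fun a => by
  unfold UC myrel
  exact inferInstanceAs (Decidable (∀ b, b ≠ a → _ ∨ ∃ d, _ ∧ _))

lemma uc_mem_s13 : ∀ a : Fin 4, a ∈ UC myrel ↔ a ≠ 0 := by decide

lemma score_eq (c : Fin 4) :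
    approvalScore UC [myrel] c = if c ∈ UC myrel then 1 else 0 := by
  simp [approvalScore]

/-- UC-Approval is not Pareto optimal, witnessed by an election
with four candidates and a single vote. -/
theorem stmt_13 : ∃ (C : Type) (E : List (C → C → Prop)) (a b : C),
    Finite C ∧ Nat.card C = 4 ∧ E.length = 1 ∧
    (∀ r ∈ E, IsTournament r) ∧ (∀ r ∈ E, r a b) ∧
    a ∉ winners UC E ∧ b ∈ winners UC E := by
  refine ⟨Fin 4, [myrel], 0, 1, inferInstance, by simp, rfl, ?_, ?_, ?_, ?_⟩
  · intro r hr
    simp only [List.mem_singleton] at hr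
    subst hr
    unfold IsTournament myrel
    exact ⟨by decide, by decide⟩
  · intro r hr
    simp only [List.mem_singleton] at hr
    subst hr
    unfold myrel; decide
  · intro h
    have := h 1
    rw [score_eq, score_eq, if_pos ((uc_mem_s13 1).2 (by decide)),
      if_neg (fun hc => (uc_mem_s13 0).1 hc rfl)] at this
    omega
  · intro d
    rw [score_eq, score_eq, if_pos ((uc_mem_s13 1).2 (by decide))]
    split <;> omega
end

section
/- Let H be a tournament on a finite candidate set C and let c ∈ C be a candidate not in the top cycle of H. Then there exists a single arc of H, i.e., a pair (x, y) with x ≻_H y, such that the tournament H' obtained from H by reversing this arc (so that y ≻_{H'} x, all other pairs unchanged) satisfies c ∈ TC(H'). -/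
open scoped Classical

/-- The tournament obtained from `r` by reversing the arc `(x, y)`:
now `y` beats `x`, and all other pairs are unchanged. -/
def reverseArc {C : Type*} (r : C → C → Prop) (x y : C) : C → C → Prop :=
  fun a b => (a = y ∧ b = x) ∨ (¬(a = x ∧ b = y) ∧ ¬(a = y ∧ b = x) ∧ r a b)

/-- A tournament on a finite nonempty set has a king: a vertex reaching all. -/
theorem exists_king {C : Type*} [Fintype C] [Nonempty C] (r : C → C → Prop)
    (hr : IsTournament r) : ∃ d : C, ∀ b : C, Relation.ReflTransGen r d b := by
  classical
  obtain ⟨d, -, hd⟩ := Finset.exists_max_image Finset.univ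
    (fun a => (Finset.univ.filter (fun b => r a b)).card)
    ⟨Classical.arbitrary C, Finset.mem_univ _⟩
  refine ⟨d, fun b => ?_⟩
  by_cases hdb : d = b
  · subst hdb; exact .refl
  by_cases h1 : r d b
  · exact .single h1
  have hbd : r b d := (hr.2 b d (Ne.symm hdb)).mpr h1
  by_cases h2 : ∃ w, r d w ∧ r w b
  · obtain ⟨w, hw1, hw2⟩ := h2
    exact (Relation.ReflTransGen.single hw1).tail hw2
  exfalso
  push_neg at h2
  have hsub : insert d (Finset.univ.filter (fun w => r d w)) ⊆
      Finset.univ.filter (fun w => r b w) := by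
    intro w hw
    simp only [Finset.mem_insert, Finset.mem_filter, Finset.mem_univ, true_and] at hw ⊢
    rcases hw with rfl | hw
    · exact hbd
    · have hwb : w ≠ b := by rintro rfl; exact h1 hw
      exact (hr.2 b w (Ne.symm hwb)).mpr (h2 w hw)
  have hdn : d ∉ Finset.univ.filter (fun w => r d w) := by
    simp [hr.1 d]
  have := Finset.card_le_card hsub
  rw [Finset.card_insert_of_notMem hdn] at this
  have hle := hd b (Finset.mem_univ b)
  omega

/-- a candidate outside the top cycle can be brought into the
top cycle by reversing a single arc. -/
theorem stmt_14 {C : Type*} [Finite C] (r : C → C → Prop)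
    (hr : IsTournament r) (c : C) (hc : c ∉ topCycle r) :
    ∃ x y : C, r x y ∧ IsTournament (reverseArc r x y) ∧
      c ∈ topCycle (reverseArc r x y) := by
  have : Nonempty C := ⟨c⟩
  have : Fintype C := Fintype.ofFinite C
  obtain ⟨d, hking⟩ := exists_king r hr
  have hne : d ≠ c := by rintro rfl; exact hc hking
  have hncd : ¬ r c d := by
    intro h
    exact hc (fun b => (Relation.ReflTransGen.single h).trans (hking b))
  have hdc : r d c := (hr.2 d c hne).mpr hncd
  refine ⟨d, c, hdc, ?_, ?_⟩
  · constructor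
    · intro a h
      rcases h with ⟨h1, h2⟩ | ⟨-, -, h⟩
      · exact hne (h2 ▸ h1 ▸ rfl)
      · exact hr.1 a h
    · intro a b hab
      have hab' := hr.2 a b hab
      have hba' := hr.2 b a hab.symm
      unfold reverseArc
      by_cases h1 : a = d <;> by_cases h2 : b = c <;> by_cases h3 : a = c <;>
        by_cases h4 : b = d <;> subst_vars <;>
          first
          | (exfalso; exact hne rfl)
          | (exfalso; exact hab rfl)
          | tauto
  · have hreach : ∀ b, Relation.ReflTransGen r d b →
        Relation.ReflTransGen (reverseArc r d c) c b := by
      intro b hb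
      induction hb with
      | refl => exact .single (Or.inl ⟨rfl, rfl⟩)
      | tail _ hab ih =>
        rename_i b₁ b₂ _
        by_cases hcase : b₁ = d ∧ b₂ = c
        · rw [hcase.2]
        · refine ih.tail (Or.inr ⟨hcase, ?_, hab⟩)
          rintro ⟨rfl, rfl⟩
          exact hncd hab
    exact fun b => hreach b (hking b)
end

section
/- Let C be a finite candidate set and let S be a Condorcet consistent tournament solution on C. Then S-Approval satisfies the majority criterion: for every election E on C, if a candidate c is the source of strictly more than half of the votes of E, then c is an S-Approval winner of E. -/
open scoped Classical

/-- The number of votes of `E` in which `c` is the source. -/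
noncomputable def sourceCount {C : Type*} (E : List (C → C → Prop)) (c : C) : ℕ :=
  (E.map (fun r => if IsSource r c then 1 else 0)).sum

/-
In every vote where `c` is the source, Condorcet consistency forces `S` to select exactly `c`.
So `c` is approved in at least `sourceCount E c` votes, while any other candidate is approved
in at most the `|E| - sourceCount E c` remaining ones, which is fewer when `c` is the source
of a strict majority of the votes.
-/

theorem CondorcetConsistent.mem_iff_eq_of_isSource {C : Type*} {S : (C → C → Prop) → Set C}
    (hCC : CondorcetConsistent S) {r : C → C → Prop} (hr : IsTournament r) {c : C}
    (hc : IsSource r c) (d : C) : d ∈ S r ↔ d = c := by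
  rw [hCC r hr c hc, Set.mem_singleton_iff]

section Election

variable {C : Type*} {S : (C → C → Prop) → Set C} {E : List (C → C → Prop)}

theorem sourceCount_le_approvalScore (hCC : CondorcetConsistent S)
    (hE : ∀ r ∈ E, IsTournament r) (c : C) :
    sourceCount E c ≤ approvalScore S E c := by
  refine List.sum_le_sum fun r hr => ?_
  by_cases hc : IsSource r c
  · simp [hc, (hCC.mem_iff_eq_of_isSource (hE r hr) hc c).2 rfl]
  · simp [hc]

theorem approvalScore_add_sourceCount_le_length (hCC : CondorcetConsistent S)
    (hE : ∀ r ∈ E, IsTournament r) {c d : C} (hdc : d ≠ c) :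
    approvalScore S E d + sourceCount E c ≤ E.length := by
  unfold approvalScore sourceCount
  rw [← List.sum_map_add]
  calc (E.map fun r => (if d ∈ S r then 1 else 0) + if IsSource r c then 1 else 0).sum
      ≤ (E.map fun _ => 1).sum := List.sum_le_sum fun r hr => ?_
    _ = E.length := by simp
  by_cases hc : IsSource r c
  · simp [hc, (hCC.mem_iff_eq_of_isSource (hE r hr) hc d).not.2 hdc]
  · simp only [hc, if_false]
    split <;> simp

end Election

theorem stmt_16_general {C : Type*} (S : (C → C → Prop) → Set C)
    (hCC : CondorcetConsistent S)
    (E : List (C → C → Prop)) (hE : ∀ r ∈ E, IsTournament r)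
    (c : C) (hmaj : E.length < 2 * sourceCount E c) :
    c ∈ winners S E := by
  intro d
  obtain rfl | hdc := eq_or_ne d c
  · exact le_rfl
  have hc := sourceCount_le_approvalScore hCC hE c
  have hd := approvalScore_add_sourceCount_le_length hCC hE hdc
  omega

/-- `S`-Approval satisfies the majority criterion for every
Condorcet consistent tournament solution `S`. -/
theorem stmt_16 {C : Type*} [Finite C] (S : (C → C → Prop) → Set C)
    (hS : ∀ r : C → C → Prop, IsTournament r → (S r).Nonempty)
    (hCC : CondorcetConsistent S)
    (E : List (C → C → Prop)) (hE : ∀ r ∈ E, IsTournament r)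
    (c : C) (hmaj : E.length < 2 * sourceCount E c) :
    c ∈ winners S E :=
  stmt_16_general S hCC E hE c hmaj
end

section
/- Let T be a tournament on a finite candidate set C and let D ⊆ C be a subset with |D| ≥ 3 and |D| odd such that the subtournament T[D] induced by D is regular (every a ∈ D has exactly (|D| − 1)/2 outneighbors inside D) and every candidate in D beats every candidate in C \ D. Then TC(T) = D, CO(T) = D, and UC(T) = D. -/
open scoped Classical

lemma tour_asymm {C : Type*} {r : C → C → Prop} (hr : IsTournament r) :
    ∀ a b, r a b → ¬ r b a := by
  intro a b hab hba
  by_cases h : a = b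
  · exact hr.1 a (h ▸ hab)
  · exact ((hr.2 a b h).mp hab) hba

lemma tour_total {C : Type*} {r : C → C → Prop} (hr : IsTournament r) :
    ∀ a b, a ≠ b → ¬ r a b → r b a := by
  intro a b hne h
  by_contra h'
  exact h ((hr.2 a b hne).mpr h')

lemma sum_deg {C : Type*} [Fintype C] {r : C → C → Prop} (hr : IsTournament r)
    (T : Finset C) :
    2 * (∑ a ∈ T, (T.filter (fun b => r a b)).card) + T.card = T.card * T.card := by
  have h1 : ∑ a ∈ T, (T.filter (fun b => r a b)).card
      = ((T ×ˢ T).filter (fun p => r p.1 p.2)).card := by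
    rw [Finset.card_filter, Finset.sum_product]
    exact Finset.sum_congr rfl fun a _ => Finset.card_filter _ _
  have h2 : (T ×ˢ T).filter (fun p => r p.1 p.2)
      = T.offDiag.filter (fun p => r p.1 p.2) := by
    ext p
    simp only [Finset.mem_filter, Finset.mem_offDiag, Finset.mem_product]
    constructor
    · rintro ⟨⟨hp1, hp2⟩, h3⟩
      exact ⟨⟨hp1, hp2, fun he => hr.1 p.1 (by rw [he] at h3 ⊢; exact h3)⟩, h3⟩
    · rintro ⟨⟨hp1, hp2, _⟩, h3⟩
      exact ⟨⟨hp1, hp2⟩, h3⟩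
  have hswap : (T.offDiag.filter (fun p => r p.1 p.2)).card
      = (T.offDiag.filter (fun p => ¬ r p.1 p.2)).card := by
    apply Finset.card_bij (fun p _ => Prod.swap p)
    · rintro ⟨x, y⟩ hp
      simp only [Finset.mem_filter, Finset.mem_offDiag] at hp ⊢
      exact ⟨⟨hp.1.2.1, hp.1.1, (hp.1.2.2).symm⟩, tour_asymm hr x y hp.2⟩
    · rintro ⟨x, y⟩ _ ⟨x', y'⟩ _ h
      exact Prod.swap_injective h
    · rintro ⟨x, y⟩ hp
      refine ⟨(y, x), ?_, rfl⟩
      simp only [Finset.mem_filter, Finset.mem_offDiag] at hp ⊢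
      exact ⟨⟨hp.1.2.1, hp.1.1, (hp.1.2.2).symm⟩,
        tour_total hr x y hp.1.2.2 hp.2⟩
  have hsplit := Finset.card_filter_add_card_filter_not
    (s := T.offDiag) (p := fun p => r p.1 p.2)
  have hoff : T.offDiag.card = T.card * T.card - T.card := Finset.offDiag_card T
  have hle : T.card ≤ T.card * T.card := by
    rcases Nat.eq_zero_or_pos T.card with h | h
    · simp [h]
    · exact Nat.le_mul_of_pos_left _ h
  rw [h2] at h1
  omega


/-- if `D` is an odd-size set of at least three candidates,
regular inside and dominating all candidates outside, then `D` is the top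
cycle, the Copeland set, and the uncovered set of the tournament. -/
theorem stmt_18 {C : Type*} [Finite C] (r : C → C → Prop)
    (hr : IsTournament r) (D : Set C)
    (hcard : 3 ≤ D.ncard) (hodd : Odd D.ncard)
    (hreg : ∀ a ∈ D, ({b : C | b ∈ D ∧ r a b}).ncard = (D.ncard - 1) / 2)
    (hdom : ∀ a ∈ D, ∀ b ∉ D, r a b) :
    topCycle r = D ∧ CO r = D ∧ UC r = D := by
  have : Fintype C := Fintype.ofFinite C
  set Df := D.toFinset with hDf
  have hmemDf : ∀ x, x ∈ Df ↔ x ∈ D := fun x => Set.mem_toFinset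
  have hms : D.ncard = Df.card := Set.ncard_eq_toFinset_card' D
  set m := D.ncard with hm
  set k := (m - 1) / 2 with hk
  have h2k : 2 * k = m - 1 := by obtain ⟨j, hj⟩ := hodd; omega
  have hk1 : 1 ≤ k := by omega
  have hDne : D.Nonempty := Set.nonempty_of_ncard_ne_zero (by omega)
  have hregF : ∀ a ∈ D, (Df.filter (fun b => r a b)).card = k := by
    intro a ha
    have h := hreg a ha
    have hset : {b : C | b ∈ D ∧ r a b}.toFinset = Df.filter (fun b => r a b) := by
      ext b; simp [hDf]
    rw [Set.ncard_eq_toFinset_card', hset] at h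
    exact h
  have hno : ∀ x ∉ D, ∀ y ∈ D, ¬ r x y := fun x hx y hy h =>
    (tour_asymm hr y x (hdom y hy x hx)) h
  have hstay : ∀ x y, Relation.ReflTransGen r x y → x ∉ D → y ∉ D := by
    intro x y h hx
    induction h with
    | refl => exact hx
    | tail _ step ih => exact fun hy => hno _ ih _ hy step
  -- strong connectivity inside D
  have hconn : ∀ a ∈ D, ∀ b ∈ D, Relation.ReflTransGen r a b := by
    intro a ha
    by_contra hcon
    push_neg at hcon
    obtain ⟨b0, hb0, hnb⟩ := hcon
    set S : Finset C := Df.filter (fun c => Relation.ReflTransGen r a c) with hS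
    set T : Finset C := Df.filter (fun c => ¬ Relation.ReflTransGen r a c) with hT
    have haS : a ∈ S := by
      rw [hS, Finset.mem_filter, hmemDf]; exact ⟨ha, Relation.ReflTransGen.refl⟩
    have hb0T : b0 ∈ T := by
      rw [hT, Finset.mem_filter, hmemDf]; exact ⟨hb0, hnb⟩
    have hTbeatsS : ∀ d ∈ T, ∀ s ∈ S, r d s := by
      intro d hd s hs
      rw [hT, Finset.mem_filter] at hd
      rw [hS, Finset.mem_filter] at hs
      have hne : s ≠ d := fun he => hd.2 (he ▸ hs.2)
      have hnsd : ¬ r s d := fun h => hd.2 (hs.2.tail h)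
      exact tour_total hr s d hne hnsd
    have hcount : ∀ d ∈ T, k = S.card + (T.filter (fun b => r d b)).card := by
      intro d hd
      have hdD : d ∈ D := (hmemDf d).mp (Finset.mem_filter.mp hd).1
      have h1 : Df.filter (fun b => r d b) = S ∪ T.filter (fun b => r d b) := by
        ext c
        constructor
        · intro hc
          rw [Finset.mem_filter] at hc
          by_cases hreach : Relation.ReflTransGen r a c
          · exact Finset.mem_union_left _ (by rw [hS, Finset.mem_filter]; exact ⟨hc.1, hreach⟩)
          · refine Finset.mem_union_right _ ?_
            rw [Finset.mem_filter, hT, Finset.mem_filter]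
            exact ⟨⟨hc.1, hreach⟩, hc.2⟩
        · intro hc
          rcases Finset.mem_union.mp hc with hc | hc
          · rw [Finset.mem_filter]
            rw [hS, Finset.mem_filter] at hc
            exact ⟨hc.1, hTbeatsS d hd c (by rw [hS, Finset.mem_filter]; exact hc)⟩
          · rw [Finset.mem_filter] at hc ⊢
            rw [hT, Finset.mem_filter] at hc
            exact ⟨hc.1.1, hc.2⟩
      have hdisj : Disjoint S (T.filter (fun b => r d b)) := by
        rw [Finset.disjoint_left]
        intro x hxS hxT
        rw [hS, Finset.mem_filter] at hxS
        rw [Finset.mem_filter, hT, Finset.mem_filter] at hxT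
        exact hxT.1.2 hxS.2
      rw [← hregF d hdD, h1, Finset.card_union_of_disjoint hdisj]
    have hsum : T.card * k = T.card * S.card + ∑ d ∈ T, (T.filter (fun b => r d b)).card := by
      calc T.card * k = ∑ _d ∈ T, k := by rw [Finset.sum_const, smul_eq_mul, mul_comm]
      _ = ∑ d ∈ T, (S.card + (T.filter (fun b => r d b)).card) :=
          Finset.sum_congr rfl fun d hd => hcount d hd
      _ = T.card * S.card + ∑ d ∈ T, (T.filter (fun b => r d b)).card := by
          rw [Finset.sum_add_distrib, Finset.sum_const, smul_eq_mul, mul_comm]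
    have hdeg := sum_deg hr T
    have hpart : S.card + T.card = Df.card :=
      Finset.card_filter_add_card_filter_not _
    have ht1 : 1 ≤ T.card := Finset.card_pos.mpr ⟨b0, hb0T⟩
    have hs1 : 1 ≤ S.card := Finset.card_pos.mpr ⟨a, haS⟩
    have key : T.card * (2 * k + 1) = T.card * (2 * S.card + T.card) := by
      have h2 : 2 * (T.card * k) = 2 * (T.card * S.card)
          + 2 * (∑ d ∈ T, (T.filter (fun b => r d b)).card) := by omega
      calc T.card * (2 * k + 1) = 2 * (T.card * k) + T.card := by ring
      _ = 2 * (T.card * S.card) + (2 * (∑ d ∈ T, (T.filter (fun b => r d b)).card)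
            + T.card) := by omega
      _ = 2 * (T.card * S.card) + T.card * T.card := by rw [hdeg]
      _ = T.card * (2 * S.card + T.card) := by ring
    have hkey := Nat.eq_of_mul_eq_mul_left (by omega : 0 < T.card) key
    omega
  -- Copeland scores
  have hscore : ∀ a : C, copelandScore r a = (Finset.univ.filter (fun b => r a b)).card := by
    intro a
    rw [copelandScore, Nat.card_eq_fintype_card, Fintype.card_subtype]
  have hscoreD : ∀ a ∈ D, copelandScore r a = k + Dfᶜ.card := by
    intro a ha
    rw [hscore]
    have hu : Finset.univ.filter (fun b => r a b) = Df.filter (fun b => r a b) ∪ Dfᶜ := by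
      ext b
      simp only [Finset.mem_filter, Finset.mem_union, Finset.mem_univ, true_and,
        Finset.mem_compl, hmemDf]
      constructor
      · intro h
        by_cases hb : b ∈ D
        · exact Or.inl ⟨hb, h⟩
        · exact Or.inr hb
      · rintro (⟨_, h⟩ | hb)
        · exact h
        · exact hdom a ha b hb
    have hdisj : Disjoint (Df.filter (fun b => r a b)) Dfᶜ := by
      rw [Finset.disjoint_left]
      intro x hx hx'
      exact (Finset.mem_compl.mp hx') (Finset.mem_filter.mp hx).1
    rw [hu, Finset.card_union_of_disjoint hdisj, hregF a ha]
  have hscoreOut : ∀ b ∉ D, copelandScore r b < k + Dfᶜ.card := by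
    intro b hb
    rw [hscore]
    have hbc : b ∈ Dfᶜ := Finset.mem_compl.mpr (fun h => hb ((hmemDf b).mp h))
    have hsub : Finset.univ.filter (fun c => r b c) ⊆ Dfᶜ.erase b := by
      intro c hc
      have hrc : r b c := (Finset.mem_filter.mp hc).2
      refine Finset.mem_erase.mpr ⟨fun he => hr.1 b (he ▸ hrc), ?_⟩
      exact Finset.mem_compl.mpr (fun h => hno b hb c ((hmemDf c).mp h) hrc)
    have h1 := Finset.card_le_card hsub
    rw [Finset.card_erase_of_mem hbc] at h1
    have h2 : 1 ≤ Dfᶜ.card := Finset.card_pos.mpr ⟨b, hbc⟩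
    omega
  -- kings
  have hking : ∀ a ∈ D, ∀ b ∈ D, b ≠ a → r a b ∨ ∃ d, r a d ∧ r d b := by
    intro a ha b hb hne
    by_cases hab : r a b
    · exact Or.inl hab
    right
    by_contra hcon
    push_neg at hcon
    have hsub : Df.filter (fun c => r a c) ⊆ (Df.filter (fun c => r b c)).erase a := by
      intro c hc
      rw [Finset.mem_filter] at hc
      have hac : r a c := hc.2
      refine Finset.mem_erase.mpr ⟨fun he => hr.1 a (he ▸ hac), ?_⟩
      rw [Finset.mem_filter]
      have hcb : c ≠ b := fun he => hab (he ▸ hac)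
      exact ⟨hc.1, tour_total hr c b hcb (hcon c hac)⟩
    have h1 := Finset.card_le_card hsub
    have haMem : a ∈ Df.filter (fun c => r b c) := by
      rw [Finset.mem_filter, hmemDf]
      exact ⟨ha, tour_total hr a b hne.symm hab⟩
    rw [Finset.card_erase_of_mem haMem, hregF a ha, hregF b hb] at h1
    omega
  refine ⟨?_, ?_, ?_⟩
  · ext x
    simp only [topCycle, Set.mem_setOf_eq]
    constructor
    · intro h
      by_contra hx
      obtain ⟨b0, hb0⟩ := hDne
      exact (hstay x b0 (h b0) hx) hb0
    · intro hx b
      by_cases hb : b ∈ D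
      · exact hconn x hx b hb
      · exact Relation.ReflTransGen.single (hdom x hx b hb)
  · ext x
    simp only [CO, Set.mem_setOf_eq]
    constructor
    · intro h
      by_contra hx
      obtain ⟨a0, ha0⟩ := hDne
      have h1 := h a0
      rw [hscoreD a0 ha0] at h1
      exact absurd h1 (not_le.mpr (hscoreOut x hx))
    · intro hx b
      rw [hscoreD x hx]
      by_cases hb : b ∈ D
      · rw [hscoreD b hb]
      · exact le_of_lt (hscoreOut b hb)
  · ext x
    simp only [UC, Set.mem_setOf_eq]
    constructor
    · intro h
      by_contra hx
      obtain ⟨a0, ha0⟩ := hDne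
      have hne : a0 ≠ x := fun he => hx (he ▸ ha0)
      rcases h a0 hne with h1 | ⟨d, hd1, hd2⟩
      · exact hno x hx a0 ha0 h1
      · have hdD : d ∉ D := fun hdD => hno x hx d hdD hd1
        exact hno d hdD a0 ha0 hd2
    · intro hx b hbne
      by_cases hb : b ∈ D
      · exact hking x hx b hb hbne
      · exact Or.inl (hdom x hx b hb)
end
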